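/- The supremum sup_{λ > 0, η ∈ ℝ^h, η₀ ∈ ℝ} g(λ, η, η₀) is finite and is attained by some (λ*, η*, η₀*) with λ* > 0; i.e., an optimal bounded dual solution exists. -/

import Mathlib

/-!
For `λ > 0` the integrand of `g` is continuous in `(λ, η, η₀, θ)` once `r²/(2ν)` is rewritten
as `ν/(2(2λS_w − ν))`, which is legitimate because `ν` solves `ν² + r²ν = 2λS_w r²`; hence `g` is
continuous on `λ > 0`. Bounding `S_w` by its maximum `M` on `[−π, π]`, completing the square and
integrating with Parseval's identity gives
`g(λ, η, η₀) ≤ ½ log (2λM) − λP + ½ − (η₀² + ‖η‖²)/(4λM)`.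
The right-hand side tends to `−∞` as `λ → 0`, as `λ → ∞`, and as `η₀² + ‖η‖² → ∞` with `λ` bounded,
so every superlevel set of `g` lies in a compact subset of `{λ > 0}`, where `g` attains its maximum.
-/

open MeasureTheory Real Filter

noncomputable section

def muI : Measure ℝ := volume.restrict (Set.Icc (-π) π)

def L2I (f : ℝ → ℝ) : Prop := MemLp f 2 muI

def causalZero (a b : ℝ → ℝ) (n : ℕ) : Prop :=
  (∫ θ in (-π)..π, a θ * Real.cos ((n : ℝ) * θ))
    + (∫ θ in (-π)..π, b θ * Real.sin ((n : ℝ) * θ)) = 0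

def powerAB (Sw a b : ℝ → ℝ) : ℝ :=
  (1 / (2 * π)) * ∫ θ in (-π)..π, ((a θ) ^ 2 + (b θ) ^ 2) * Sw θ

def rateAB (a b : ℝ → ℝ) : ℝ :=
  (1 / (4 * π)) * ∫ θ in (-π)..π, Real.log ((1 + a θ) ^ 2 + (b θ) ^ 2)

/-- Feedback capacity: causality constraints for all `n ≥ 0`. -/
def Cfb (Sw : ℝ → ℝ) (P : ℝ) : ℝ :=
  sSup {R | ∃ a b : ℝ → ℝ, L2I a ∧ L2I b ∧ powerAB Sw a b ≤ P ∧
    (∀ n : ℕ, causalZero a b n) ∧ R = rateAB a b}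

/-- `C_fb(h)`: causality constraints only for `0 ≤ n ≤ h`. -/
def CfbH (Sw : ℝ → ℝ) (P : ℝ) (h : ℕ) : ℝ :=
  sSup {R | ∃ a b : ℝ → ℝ, L2I a ∧ L2I b ∧ powerAB Sw a b ≤ P ∧
    (∀ n : ℕ, n ≤ h → causalZero a b n) ∧ R = rateAB a b}

def dotA (h : ℕ) (η : Fin h → ℝ) (θ : ℝ) : ℝ :=
  ∑ k : Fin h, η k * Real.cos (((k.1 + 1 : ℕ) : ℝ) * θ)

def dotB (h : ℕ) (η : Fin h → ℝ) (θ : ℝ) : ℝ :=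
  ∑ k : Fin h, η k * Real.sin (((k.1 + 1 : ℕ) : ℝ) * θ)

/-- `r²(θ)`. -/
def rsq (Sw : ℝ → ℝ) {h : ℕ} (lam : ℝ) (η : Fin h → ℝ) (η0 θ : ℝ) : ℝ :=
  (2 * lam * Sw θ + dotA h η θ + η0) ^ 2 + (dotB h η θ) ^ 2

/-- `ν(θ) = (−r² + √(r⁴ + 8λS_w r²))/2`. -/
def nuf (Sw : ℝ → ℝ) {h : ℕ} (lam : ℝ) (η : Fin h → ℝ) (η0 θ : ℝ) : ℝ :=
  (-(rsq Sw lam η η0 θ)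
    + Real.sqrt ((rsq Sw lam η η0 θ) ^ 2 + 8 * lam * Sw θ * rsq Sw lam η η0 θ)) / 2

/-- The dual function `g(λ,η,η₀)`.  (In Lean, `x / 0 = 0`, which implements the
convention `r²/(2ν) = 0` when `ν = 0`.) -/
def gdual (Sw : ℝ → ℝ) (P : ℝ) {h : ℕ} (lam : ℝ) (η : Fin h → ℝ) (η0 : ℝ) : ℝ :=
  (1 / (2 * π)) * (∫ θ in (-π)..π,
      ((1 / 2) * Real.log (2 * lam * Sw θ - nuf Sw lam η η0 θ)
        - rsq Sw lam η η0 θ / (2 * nuf Sw lam η η0 θ) + lam * Sw θ))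
    - lam * P + η0 + 1 / 2

theorem IsCompact.exists_isMaxOn_of_superlevel_subset {α β : Type*} [LinearOrder α]
    [TopologicalSpace α] [ClosedIciTopology α] [TopologicalSpace β] {f : β → α} {s K : Set β}
    (hK : IsCompact K) (hKs : K ⊆ s) (hf : ContinuousOn f K) {x₀ : β} (hx₀ : x₀ ∈ s)
    (hsuper : ∀ x ∈ s, f x₀ ≤ f x → x ∈ K) : ∃ x ∈ s, IsMaxOn f s x := by
  obtain ⟨x, hxK, hmax⟩ := hK.exists_isMaxOn ⟨x₀, hsuper x₀ hx₀ le_rfl⟩ hf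
  refine ⟨x, hKs hxK, fun y hy => ?_⟩
  by_cases hyK : y ∈ K
  · exact hmax hyK
  · exact ((not_le.mp (mt (hsuper y hy) hyK)).trans_le (hmax (hsuper x₀ hx₀ le_rfl))).le

section Circle

open Complex Polynomial

theorem continuous_norm_eval_div_eval_circle_sq {p q : ℂ[X]}
    (hq : ∀ z : ℂ, ‖z‖ = 1 → q.eval z ≠ 0) :
    Continuous fun θ : ℝ => ‖p.eval (exp (θ * I)) / q.eval (exp (θ * I))‖ ^ 2 := by
  have hq' : ∀ θ : ℝ, q.eval (exp (θ * I)) ≠ 0 := fun θ => hq _ (norm_exp_ofReal_mul_I θ)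
  fun_prop (disch := exact hq')

theorem norm_eval_div_eval_circle_sq_pos {p q : ℂ[X]}
    (hp : ∀ z : ℂ, ‖z‖ = 1 → p.eval z ≠ 0) (hq : ∀ z : ℂ, ‖z‖ = 1 → q.eval z ≠ 0) (θ : ℝ) :
    0 < ‖p.eval (exp (θ * I)) / q.eval (exp (θ * I))‖ ^ 2 := by
  have hθ := norm_exp_ofReal_mul_I θ
  exact pow_pos (norm_pos_iff.mpr (div_ne_zero (hp _ hθ) (hq _ hθ))) 2

end Circle

theorem integral_cos_int_mul (n : ℤ) :
    ∫ θ in (-π)..π, Real.cos (n * θ) = if n = 0 then 2 * π else 0 := by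
  split_ifs with hn
  · simp [hn]; ring
  · have hn' : (n : ℝ) ≠ 0 := by exact_mod_cast hn
    rw [intervalIntegral.integral_comp_mul_left (fun x => Real.cos x) hn', integral_cos,
      mul_neg, Real.sin_neg, Real.sin_int_mul_pi]
    simp

theorem integral_sq_add_sq_trigSum {ι : Type*} [Fintype ι] (c : ι → ℝ) {n : ι → ℕ}
    (hn : Function.Injective n) :
    ∫ θ in (-π)..π, ((∑ i, c i * Real.cos (n i * θ)) ^ 2 + (∑ i, c i * Real.sin (n i * θ)) ^ 2)
      = 2 * π * ∑ i, c i ^ 2 := by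
  classical
  have hexpand : ∀ θ : ℝ,
      (∑ i, c i * Real.cos (n i * θ)) ^ 2 + (∑ i, c i * Real.sin (n i * θ)) ^ 2
        = ∑ i, ∑ j, c i * c j * Real.cos (((n i - n j : ℤ) : ℝ) * θ) := by
    intro θ
    simp only [sq, Finset.sum_mul_sum, ← Finset.sum_add_distrib]
    refine Finset.sum_congr rfl fun i _ => Finset.sum_congr rfl fun j _ => ?_
    push_cast
    rw [sub_mul, Real.cos_sub]
    ring
  have hterm : ∀ i j, ∫ θ in (-π)..π, c i * c j * Real.cos (((n i - n j : ℤ) : ℝ) * θ)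
      = if i = j then 2 * π * c i ^ 2 else 0 := by
    intro i j
    rw [intervalIntegral.integral_const_mul, integral_cos_int_mul]
    by_cases hij : i = j
    · simp [hij]; ring
    · simp [hij, sub_eq_zero, hn.eq_iff]
  have hint : ∀ i j, IntervalIntegrable
      (fun θ => c i * c j * Real.cos (((n i - n j : ℤ) : ℝ) * θ)) volume (-π) π :=
    fun i j => (by fun_prop : Continuous _).intervalIntegrable _ _
  simp_rw [hexpand]
  rw [intervalIntegral.integral_finsetSum fun i _ => (continuous_finsetSum _ fun j _ =>
    (by fun_prop : Continuous fun θ => c i * c j * Real.cos (((n i - n j : ℤ) : ℝ) * θ))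
    ).intervalIntegrable _ _]
  rw [Finset.mul_sum]
  refine Finset.sum_congr rfl fun i _ => ?_
  rw [intervalIntegral.integral_finsetSum fun j _ => hint i j]
  simp only [hterm, Finset.sum_ite_eq, Finset.mem_univ, if_true]

section TrigSums

variable {h : ℕ}

theorem continuous_dotA (η : Fin h → ℝ) : Continuous (dotA h η) := by
  unfold dotA; fun_prop

theorem continuous_dotB (η : Fin h → ℝ) : Continuous (dotB h η) := by
  unfold dotB; fun_prop

theorem dotA_add_eq_sum_cons (η : Fin h → ℝ) (c θ : ℝ) :
    dotA h η θ + c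
      = ∑ i : Fin (h + 1), (Fin.cons c η : Fin (h + 1) → ℝ) i * Real.cos (i.val * θ) := by
  simp [Fin.sum_univ_succ, dotA, add_comm]

theorem dotB_eq_sum_cons (η : Fin h → ℝ) (c θ : ℝ) :
    dotB h η θ
      = ∑ i : Fin (h + 1), (Fin.cons c η : Fin (h + 1) → ℝ) i * Real.sin (i.val * θ) := by
  simp [Fin.sum_univ_succ, dotB]

theorem integral_dotA_add_sq_add_dotB_sq (η : Fin h → ℝ) (c : ℝ) :
    ∫ θ in (-π)..π, ((dotA h η θ + c) ^ 2 + dotB h η θ ^ 2) = 2 * π * (c ^ 2 + ∑ k, η k ^ 2) := by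
  simp_rw [dotA_add_eq_sum_cons η c, dotB_eq_sum_cons η c]
  rw [integral_sq_add_sq_trigSum _ Fin.val_injective, Fin.sum_univ_succ]
  simp

end TrigSums

theorem rsq_nonneg {h : ℕ} (Sw : ℝ → ℝ) (lam : ℝ) (η : Fin h → ℝ) (η0 θ : ℝ) :
    0 ≤ rsq Sw lam η η0 θ := by
  unfold rsq; positivity

-- Unlike the integrand of `gdual`, this form never divides by `ν`, which vanishes where `r² = 0`.
def dualIntegrand (Sw : ℝ → ℝ) {h : ℕ} (lam : ℝ) (η : Fin h → ℝ) (η0 θ : ℝ) : ℝ :=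
  (1 / 2) * Real.log (2 * lam * Sw θ - nuf Sw lam η η0 θ)
    - nuf Sw lam η η0 θ / (2 * (2 * lam * Sw θ - nuf Sw lam η η0 θ)) + lam * Sw θ

section Integrand

variable {h : ℕ} {Sw : ℝ → ℝ} {lam : ℝ} {η : Fin h → ℝ} {η0 θ : ℝ}

theorem nuf_sq_add_rsq_mul (hc : 0 ≤ lam * Sw θ) :
    nuf Sw lam η η0 θ ^ 2 + rsq Sw lam η η0 θ * nuf Sw lam η η0 θ
      = 2 * lam * Sw θ * rsq Sw lam η η0 θ := by
  have hr := rsq_nonneg Sw lam η η0 θ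
  have hsq := Real.sq_sqrt (show 0 ≤ rsq Sw lam η η0 θ ^ 2 + 8 * lam * Sw θ * rsq Sw lam η η0 θ
    by nlinarith)
  unfold nuf
  linear_combination hsq / 4

theorem nuf_nonneg (hc : 0 ≤ lam * Sw θ) : 0 ≤ nuf Sw lam η η0 θ := by
  have hr := rsq_nonneg Sw lam η η0 θ
  have : rsq Sw lam η η0 θ ≤ √(rsq Sw lam η η0 θ ^ 2 + 8 * lam * Sw θ * rsq Sw lam η η0 θ) :=
    Real.le_sqrt_of_sq_le (by nlinarith)
  unfold nuf; linarith

theorem nuf_lt (hc : 0 < lam * Sw θ) : nuf Sw lam η η0 θ < 2 * lam * Sw θ := by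
  have hr := rsq_nonneg Sw lam η η0 θ
  have : √(rsq Sw lam η η0 θ ^ 2 + 8 * lam * Sw θ * rsq Sw lam η η0 θ)
      < 4 * lam * Sw θ + rsq Sw lam η η0 θ :=
    (Real.sqrt_lt' (by nlinarith)).mpr (by nlinarith)
  unfold nuf; linarith

theorem nuf_pos (hc : 0 < lam * Sw θ) (hr : 0 < rsq Sw lam η η0 θ) :
    0 < nuf Sw lam η η0 θ := by
  refine (nuf_nonneg hc.le).lt_of_ne fun h0 => ?_
  have := nuf_sq_add_rsq_mul (η := η) (η0 := η0) hc.le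
  rw [← h0] at this
  nlinarith

theorem rsq_div_nuf_eq (hc : 0 < lam * Sw θ) :
    rsq Sw lam η η0 θ / (2 * nuf Sw lam η η0 θ)
      = nuf Sw lam η η0 θ / (2 * (2 * lam * Sw θ - nuf Sw lam η η0 θ)) := by
  have hquad := nuf_sq_add_rsq_mul (η := η) (η0 := η0) hc.le
  have hgap := nuf_lt (η := η) (η0 := η0) hc
  rcases (rsq_nonneg Sw lam η η0 θ).eq_or_lt with hr | hr
  · have : nuf Sw lam η η0 θ = 0 := by
      rw [← hr] at hquad; nlinarith [nuf_nonneg (η := η) (η0 := η0) hc.le]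
    rw [this, ← hr]; simp
  · have hν := nuf_pos hc hr
    rw [div_eq_div_iff (by positivity) (by linarith)]
    linear_combination -2 * hquad

theorem rsq_div_le_rsq_div_nuf (hc : 0 < lam * Sw θ) :
    rsq Sw lam η η0 θ / (4 * lam * Sw θ) ≤ rsq Sw lam η η0 θ / (2 * nuf Sw lam η η0 θ) := by
  rcases (rsq_nonneg Sw lam η η0 θ).eq_or_lt with hr | hr
  · simp [← hr]
  · have := nuf_lt (η := η) (η0 := η0) hc
    exact div_le_div_of_nonneg_left hr.le (by linarith [nuf_pos hc hr]) (by linarith)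

theorem gdual_eq_integral_dualIntegrand (P : ℝ) (hpos : ∀ θ, 0 < Sw θ) (hlam : 0 < lam) :
    gdual Sw P lam η η0
      = (1 / (2 * π)) * (∫ θ in (-π)..π, dualIntegrand Sw lam η η0 θ) - lam * P + η0 + 1 / 2 := by
  unfold gdual dualIntegrand
  congr 4
  refine intervalIntegral.integral_congr fun θ _ => ?_
  simp only [rsq_div_nuf_eq (mul_pos hlam (hpos θ))]

theorem dualIntegrand_le {M : ℝ} (hlam : 0 < lam) (hS : 0 < Sw θ) (hSM : Sw θ ≤ M) :
    dualIntegrand Sw lam η η0 θ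
      ≤ (1 / 2) * Real.log (2 * lam * M) + lam * M
        - ((dotA h η θ + (η0 + 2 * lam * M)) ^ 2 + dotB h η θ ^ 2) / (4 * lam * M) := by
  have hc := mul_pos hlam hS
  have hM0 : 0 < M := hS.trans_le hSM
  have hgap := nuf_lt (η := η) (η0 := η0) hc
  have hlog : Real.log (2 * lam * Sw θ - nuf Sw lam η η0 θ) ≤ Real.log (2 * lam * M) :=
    Real.log_le_log (by linarith) (by nlinarith [nuf_nonneg (η := η) (η0 := η0) hc.le])
  have hdiv := rsq_div_le_rsq_div_nuf (η := η) (η0 := η0) hc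
  have hdivM : ((dotA h η θ + η0) ^ 2 + dotB h η θ ^ 2) / (4 * lam * M)
      ≤ ((dotA h η θ + η0) ^ 2 + dotB h η θ ^ 2) / (4 * lam * Sw θ) := by
    gcongr
  have hsquare : lam * Sw θ - rsq Sw lam η η0 θ / (4 * lam * Sw θ)
      = -(dotA h η θ + η0) - ((dotA h η θ + η0) ^ 2 + dotB h η θ ^ 2) / (4 * lam * Sw θ) := by
    unfold rsq
    field_simp
    ring
  have hsquareM : -(dotA h η θ + η0) - ((dotA h η θ + η0) ^ 2 + dotB h η θ ^ 2) / (4 * lam * M)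
      = lam * M - ((dotA h η θ + (η0 + 2 * lam * M)) ^ 2 + dotB h η θ ^ 2) / (4 * lam * M) := by
    field_simp
    ring
  unfold dualIntegrand
  rw [← rsq_div_nuf_eq hc]
  linarith

end Integrand

section Continuity

variable {h : ℕ} {Sw : ℝ → ℝ}

theorem continuous_dualIntegrand (hSw : Continuous Sw) (hpos : ∀ θ, 0 < Sw θ) :
    Continuous fun p : {x : ℝ × (Fin h → ℝ) × ℝ | 0 < x.1} × ℝ =>
      dualIntegrand Sw p.1.1.1 p.1.1.2.1 p.1.1.2.2 p.2 := by
  have hgap : ∀ p : {x : ℝ × (Fin h → ℝ) × ℝ | 0 < x.1} × ℝ,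
      2 * p.1.1.1 * Sw p.2 - nuf Sw p.1.1.1 p.1.1.2.1 p.1.1.2.2 p.2 ≠ 0 := fun p =>
    (sub_pos.mpr (nuf_lt (mul_pos p.1.2 (hpos p.2)))).ne'
  have hν : Continuous fun p : {x : ℝ × (Fin h → ℝ) × ℝ | 0 < x.1} × ℝ =>
      nuf Sw p.1.1.1 p.1.1.2.1 p.1.1.2.2 p.2 := by
    unfold nuf rsq dotA dotB
    fun_prop
  unfold dualIntegrand
  fun_prop (disch := intro p; simp [hgap])

theorem continuous_dualIntegrand_right {lam : ℝ} (hSw : Continuous Sw) (hpos : ∀ θ, 0 < Sw θ)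
    (hlam : 0 < lam) (η : Fin h → ℝ) (η0 : ℝ) : Continuous (dualIntegrand Sw lam η η0) :=
  (continuous_dualIntegrand hSw hpos).comp
    (Continuous.prodMk_right (⟨(lam, η, η0), hlam⟩ : {x : ℝ × (Fin h → ℝ) × ℝ | 0 < x.1}))

theorem continuousOn_gdual (P : ℝ) (hSw : Continuous Sw) (hpos : ∀ θ, 0 < Sw θ) :
    ContinuousOn (fun x : ℝ × (Fin h → ℝ) × ℝ => gdual Sw P x.1 x.2.1 x.2.2) {x | 0 < x.1} := by
  have hint : Continuous fun x : {x : ℝ × (Fin h → ℝ) × ℝ | 0 < x.1} =>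
      ∫ θ in (-π)..π, dualIntegrand Sw x.1.1 x.1.2.1 x.1.2.2 θ :=
    intervalIntegral.continuous_parametric_intervalIntegral_of_continuous'
      (continuous_dualIntegrand hSw hpos) _ _
  rw [continuousOn_iff_continuous_domRestrict]
  refine Continuous.congr ?_ fun x => (gdual_eq_integral_dualIntegrand P hpos x.2).symm
  fun_prop

end Continuity

def dualMajorant (M P lam D : ℝ) : ℝ :=
  (1 / 2) * Real.log (2 * lam * M) - lam * P + 1 / 2 - D / (4 * lam * M)

theorem gdual_le_dualMajorant {h : ℕ} {Sw : ℝ → ℝ} {M lam : ℝ} (P : ℝ) (hSw : Continuous Sw)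
    (hpos : ∀ θ, 0 < Sw θ) (hM : ∀ θ ∈ Set.Icc (-π) π, Sw θ ≤ M) (hlam : 0 < lam)
    (η : Fin h → ℝ) (η0 : ℝ) :
    gdual Sw P lam η η0 ≤ dualMajorant M P lam (η0 ^ 2 + ∑ k, η k ^ 2) := by
  have hM0 : 0 < M := (hpos 0).trans_le (hM 0 ⟨by linarith [pi_pos], pi_pos.le⟩)
  have hA := continuous_dotA η
  have hB := continuous_dotB η
  have hle : ∫ θ in (-π)..π, dualIntegrand Sw lam η η0 θ
      ≤ ∫ θ in (-π)..π, ((1 / 2) * Real.log (2 * lam * M) + lam * M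
          - ((dotA h η θ + (η0 + 2 * lam * M)) ^ 2 + dotB h η θ ^ 2) / (4 * lam * M)) := by
    refine intervalIntegral.integral_mono_on (by linarith [pi_pos]) ?_ ?_
      fun θ hθ => dualIntegrand_le hlam (hpos θ) (hM θ hθ)
    · exact (continuous_dualIntegrand_right hSw hpos hlam η η0).intervalIntegrable _ _
    · exact (by fun_prop : Continuous _).intervalIntegrable _ _
  rw [intervalIntegral.integral_sub intervalIntegrable_const
      ((by fun_prop : Continuous _).intervalIntegrable _ _), intervalIntegral.integral_const,
    intervalIntegral.integral_div, integral_dotA_add_sq_add_dotB_sq] at hle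
  rw [gdual_eq_integral_dualIntegrand P hpos hlam, dualMajorant]
  have hπ := pi_pos
  calc (1 / (2 * π)) * (∫ θ in (-π)..π, dualIntegrand Sw lam η η0 θ) - lam * P + η0 + 1 / 2
      ≤ (1 / (2 * π)) * ((π - -π) • ((1 / 2) * Real.log (2 * lam * M) + lam * M)
          - 2 * π * ((η0 + 2 * lam * M) ^ 2 + ∑ k, η k ^ 2) / (4 * lam * M))
          - lam * P + η0 + 1 / 2 := by gcongr
    _ = _ := by field_simp; ring

theorem dualMajorant_superlevel_bounded {M P : ℝ} (hM : 0 < M) (hP : 0 < P) (c : ℝ) :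
    ∃ a b R : ℝ, 0 < a ∧ ∀ lam D : ℝ, 0 < lam → 0 ≤ D → c ≤ dualMajorant M P lam D →
      a ≤ lam ∧ lam ≤ b ∧ D ≤ R := by
  set b := 4 * ((1 / 2) * Real.log (4 * M / P) - c) / (3 * P)
  refine ⟨Real.exp (2 * c - 1) / (2 * M), b,
    4 * b * M * ((1 / 2) * Real.log (2 * b * M) + 1 / 2 - c), by positivity, ?_⟩
  intro lam D hlam hD hc
  unfold dualMajorant at hc
  have hDdiv : 0 ≤ D / (4 * lam * M) := by positivity
  have hlamP : 0 ≤ lam * P := by positivity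
  have ha : Real.exp (2 * c - 1) / (2 * M) ≤ lam := by
    have := (Real.le_log_iff_exp_le (by positivity)).mp (show 2 * c - 1 ≤ Real.log (2 * lam * M)
      by linarith)
    rw [div_le_iff₀ (by positivity)]
    linarith
  have hlog : Real.log (2 * lam * M) ≤ Real.log (4 * M / P) + lam * P / 2 - 1 := by
    rw [show 2 * lam * M = 4 * M / P * (lam * P / 2) by field_simp; ring,
      Real.log_mul (by positivity) (by positivity)]
    linarith [Real.log_le_sub_one_of_pos (show 0 < lam * P / 2 by positivity)]
  have hb : lam ≤ b := by
    rw [le_div_iff₀ (by positivity)]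
    linarith
  refine ⟨ha, hb, ?_⟩
  have hlogb : Real.log (2 * lam * M) ≤ Real.log (2 * b * M) :=
    Real.log_le_log (by positivity) (by gcongr)
  have hdivb : D / (4 * b * M) ≤ D / (4 * lam * M) := by gcongr
  have := (div_le_iff₀ (by nlinarith : 0 < 4 * b * M)).mp
    (show D / (4 * b * M) ≤ (1 / 2) * Real.log (2 * b * M) + 1 / 2 - c by nlinarith)
  linarith

theorem exists_isCompact_superlevel_gdual {h : ℕ} {Sw : ℝ → ℝ} {P : ℝ} (hSw : Continuous Sw)
    (hpos : ∀ θ, 0 < Sw θ) (hP : 0 < P) (c : ℝ) :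
    ∃ K : Set (ℝ × (Fin h → ℝ) × ℝ), IsCompact K ∧ K ⊆ {x | 0 < x.1} ∧
      ∀ x : ℝ × (Fin h → ℝ) × ℝ, 0 < x.1 → c ≤ gdual Sw P x.1 x.2.1 x.2.2 → x ∈ K := by
  obtain ⟨θM, -, hθM⟩ := isCompact_Icc.exists_isMaxOn
    (Set.nonempty_Icc.mpr (by linarith [pi_pos] : -π ≤ π)) hSw.continuousOn
  obtain ⟨a, b, R, ha, hbounds⟩ := dualMajorant_superlevel_bounded (hpos θM) hP c
  refine ⟨Set.Icc a b ×ˢ (Metric.closedBall 0 √R ×ˢ Set.Icc (-√R) √R),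
    isCompact_Icc.prod ((isCompact_closedBall _ _).prod isCompact_Icc),
    fun x hx => ha.trans_le hx.1.1, ?_⟩
  rintro ⟨lam, η, η0⟩ hlam hc
  obtain ⟨hal, hlb, hR⟩ := hbounds lam _ hlam (by positivity)
    (hc.trans (gdual_le_dualMajorant P hSw hpos (fun θ hθ => hθM hθ) hlam η η0))
  have hηk : ∀ k, η k ^ 2 ≤ R := fun k => by
    nlinarith [Finset.single_le_sum (fun j _ => sq_nonneg (η j)) (Finset.mem_univ k)]
  have hη0 : η0 ^ 2 ≤ R := by
    have : 0 ≤ ∑ k, η k ^ 2 := by positivity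
    linarith
  refine ⟨⟨hal, hlb⟩, ?_, abs_le.mp (Real.abs_le_sqrt hη0)⟩
  rw [mem_closedBall_zero_iff, pi_norm_le_iff_of_nonneg (Real.sqrt_nonneg R)]
  exact fun k => Real.abs_le_sqrt (hηk k)

theorem dual_optimum_exists
    (p q : Polynomial ℝ)
    (hq : ∀ z : ℂ, (q.map (algebraMap ℝ ℂ)).eval z = 0 → ‖z‖ < 1)
    (hp : ∀ z : ℂ, ‖z‖ = 1 → (p.map (algebraMap ℝ ℂ)).eval z ≠ 0)
    (Sw : ℝ → ℝ)
    (hSw : ∀ θ : ℝ, Sw θ =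
      (‖(p.map (algebraMap ℝ ℂ)).eval (Complex.exp ((θ : ℂ) * Complex.I)) /
        (q.map (algebraMap ℝ ℂ)).eval (Complex.exp ((θ : ℂ) * Complex.I))‖) ^ 2)
    (P : ℝ) (hP : 0 < P)
    (h : ℕ) :
    ∃ (lam : ℝ) (η : Fin h → ℝ) (η0 : ℝ), 0 < lam ∧
      (∀ (lam' : ℝ) (η' : Fin h → ℝ) (η0' : ℝ), 0 < lam' →
        gdual Sw P lam' η' η0' ≤ gdual Sw P lam η η0) ∧
      gdual Sw P lam η η0 =
        sSup {y | ∃ (lam' : ℝ) (η' : Fin h → ℝ) (η0' : ℝ),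
          0 < lam' ∧ y = gdual Sw P lam' η' η0'} := by
  have hq' : ∀ z : ℂ, ‖z‖ = 1 → (q.map (algebraMap ℝ ℂ)).eval z ≠ 0 :=
    fun z hz h0 => (hq z h0).ne hz
  have hSwc : Continuous Sw :=
    (continuous_norm_eval_div_eval_circle_sq hq').congr fun θ => (hSw θ).symm
  have hpos : ∀ θ, 0 < Sw θ := fun θ => (hSw θ).symm ▸ norm_eval_div_eval_circle_sq_pos hp hq' θ
  obtain ⟨K, hK, hKpos, hsuper⟩ :=
    exists_isCompact_superlevel_gdual (h := h) hSwc hpos hP (gdual Sw P 1 0 0)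
  obtain ⟨x, hx, hmax⟩ := hK.exists_isMaxOn_of_superlevel_subset
    (f := fun x : ℝ × (Fin h → ℝ) × ℝ => gdual Sw P x.1 x.2.1 x.2.2) (x₀ := (1, 0, 0)) hKpos
    ((continuousOn_gdual P hSwc hpos).mono hKpos) (by simp) hsuper
  have hub : ∀ (lam' : ℝ) (η' : Fin h → ℝ) (η0' : ℝ), 0 < lam' →
      gdual Sw P lam' η' η0' ≤ gdual Sw P x.1 x.2.1 x.2.2 :=
    fun lam' η' η0' hlam' => isMaxOn_iff.mp hmax (lam', η', η0') hlam'
  refine ⟨x.1, x.2.1, x.2.2, hx, hub,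
    Eq.symm <| IsGreatest.csSup_eq ⟨⟨x.1, x.2.1, x.2.2, hx, rfl⟩, ?_⟩⟩
  rintro y ⟨lam', η', η0', hlam', rfl⟩
  exact hub lam' η' η0' hlam'
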